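/- arXiv:1706.09575 — 4 statements merged into one kernel-verified Lean document; each statement's English description precedes it below -/
import Mathlib

section
/- Day convolution of small presheaves is small: if (A, ⊗) is a monoidal locally small category and F, G are small presheaves on A, then the Day convolution F ⊗_Day G, defined by the coend (F ⊗_Day G)(c) = ∫^{a,b} A(c, a ⊗ b) × F(a) × G(b), is again a small presheaf on A. -/
open CategoryTheory Opposite Limits MonoidalCategory

universe v u

/-- A presheaf on a locally small category `C` is small if it is a small colimit of
representables. -/
def IsSmallPresheaf {C : Type u} [Category.{v} C] (F : Cᵒᵖ ⥤ Type v) : Prop :=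
  ∃ (J : Cat.{v, v}) (D : J ⥤ C) (c : Cocone (D ⋙ yoneda)),
    Nonempty (IsColimit c) ∧ Nonempty (c.pt ≅ F)

variable {A : Type u} [Category.{v} A]

/-- The external product `F × G : (A × A)ᵒᵖ ⥤ Type` of two presheaves. -/
def extProd (X Y : Aᵒᵖ ⥤ Type v) : (A × A)ᵒᵖ ⥤ Type v where
  obj p := X.obj (op p.unop.1) × Y.obj (op p.unop.2)
  map {p q} f := TypeCat.ofHom fun z => (X.map (f.unop.1.op) z.1, Y.map (f.unop.2.op) z.2)
  map_id p := by ext z <;> simp [CategoryTheory.unop_id]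
  map_comp f g := by ext z <;> simp

variable [MonoidalCategory A]

/-- The tensor product functor `⊗ : A × A ⥤ A` of a monoidal category. -/
def tensorF : A × A ⥤ A where
  obj p := p.1 ⊗ p.2
  map f := MonoidalCategory.tensorHom f.1 f.2
  map_id p := MonoidalCategory.id_tensorHom_id p.1 p.2
  map_comp f g := (MonoidalCategory.tensorHom_comp_tensorHom f.1 f.2 g.1 g.2).symm

/-!
Write `F` and `G` as colimits of representables `y(K₁ j)` and `y(K₂ k)`. Since products of
sets commute with colimits in each variable, the external product `F × G` is the colimit of the
representables `y(K₁ j, K₂ k)` on `A × A`. A left Kan extension along a functor `L.op` sends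
`y(b)` to `y(L b)` (Yoneda), and it commutes with colimits since both are characterised by maps
out of them; so the Day convolution is the colimit of the representables `y(K₁ j ⊗ K₂ k)`.
-/

lemma isSmallPresheaf_of_isColimit {C : Type u} [Category.{v} C] {J : Type v} [Category.{v} J]
    {K : J ⥤ C} {c : Cocone (K ⋙ yoneda)} (hc : IsColimit c) : IsSmallPresheaf c.pt :=
  ⟨Cat.of J, K, c, ⟨hc⟩, ⟨Iso.refl _⟩⟩

lemma IsSmallPresheaf.exists_isColimit {C : Type u} [Category.{v} C] {F : Cᵒᵖ ⥤ Type v}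
    (hF : IsSmallPresheaf F) :
    ∃ (J : Cat.{v, v}) (K : J ⥤ C) (c : Cocone (K ⋙ yoneda)),
      Nonempty (IsColimit c) ∧ c.pt = F := by
  obtain ⟨J, K, c, ⟨hc⟩, ⟨e⟩⟩ := hF
  exact ⟨J, K, c.extend e.hom, ⟨hc.extendIso e.hom⟩, rfl⟩

section LeftKanExtension

variable {C : Type*} [Category.{v} C] {B : Type*} [Category.{v} B] (L : B ⥤ C)

/-- Exhibits `yoneda.obj (L.obj b)` as a left Kan extension of `yoneda.obj b` along `L.op`. -/
def yonedaAlongEquiv (b : B) (P : Cᵒᵖ ⥤ Type v) :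
    (yoneda.obj b ⟶ L.op ⋙ P) ≃ (yoneda.obj (L.obj b) ⟶ P) :=
  yonedaEquiv.trans (yonedaEquiv (X := L.obj b) (F := P)).symm

lemma yonedaAlongEquiv_yoneda_map_comp {b b' : B} (f : b ⟶ b') {P : Cᵒᵖ ⥤ Type v}
    (τ : yoneda.obj b' ⟶ L.op ⋙ P) :
    yonedaAlongEquiv L b P (yoneda.map f ≫ τ) =
      yoneda.map (L.map f) ≫ yonedaAlongEquiv L b' P τ := by
  simp only [yonedaAlongEquiv, Equiv.trans_apply, yonedaEquiv_symm_naturality_left,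
    ← yonedaEquiv_naturality]
  rfl

lemma yonedaAlongEquiv_comp_whiskerLeft {b : B} {P Q : Cᵒᵖ ⥤ Type v}
    (τ : yoneda.obj b ⟶ L.op ⋙ P) (m : P ⟶ Q) :
    yonedaAlongEquiv L b Q (τ ≫ Functor.whiskerLeft L.op m) = yonedaAlongEquiv L b P τ ≫ m := by
  simp only [yonedaAlongEquiv, Equiv.trans_apply, yonedaEquiv_symm_naturality_right,
    yonedaEquiv_comp]
  rfl

variable {J : Type*} [Category J] {K : J ⥤ B}

abbrev CategoryTheory.Limits.Cocone.pushAlong {P : Cᵒᵖ ⥤ Type v} (s : Cocone (K ⋙ yoneda))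
    (β : s.pt ⟶ L.op ⋙ P) : Cocone ((K ⋙ L) ⋙ yoneda) where
  pt := P
  ι.app j := yonedaAlongEquiv L (K.obj j) P (s.ι.app j ≫ β)
  ι.naturality j j' φ := by
    simpa [← yonedaAlongEquiv_yoneda_map_comp] using
      congrArg (fun t => yonedaAlongEquiv L (K.obj j) P (t ≫ β)) (s.w φ)

abbrev CategoryTheory.Limits.Cocone.pullAlong (s : Cocone ((K ⋙ L) ⋙ yoneda)) :
    Cocone (K ⋙ yoneda) where
  pt := L.op ⋙ s.pt
  ι.app j := (yonedaAlongEquiv L (K.obj j) s.pt).symm (s.ι.app j)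
  ι.naturality j j' φ := by
    apply (yonedaAlongEquiv L (K.obj j) s.pt).injective
    simpa [yonedaAlongEquiv_yoneda_map_comp] using s.w φ

noncomputable def CategoryTheory.Limits.IsColimit.pushAlong {c : Cocone (K ⋙ yoneda)}
    (hc : IsColimit c) (D : Cᵒᵖ ⥤ Type v) (α : c.pt ⟶ L.op ⋙ D) [hα : D.IsLeftKanExtension α] :
    IsColimit (c.pushAlong L α) where
  desc s := D.descOfIsLeftKanExtension α s.pt (hc.desc (s.pullAlong L))
  fac s j := by
    dsimp only
    rw [← yonedaAlongEquiv_comp_whiskerLeft, Category.assoc, D.descOfIsLeftKanExtension_fac,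
      hc.fac]
    exact Equiv.apply_symm_apply _ _
  uniq s m hm := by
    apply D.hom_ext_of_isLeftKanExtension α
    rw [D.descOfIsLeftKanExtension_fac]
    refine hc.hom_ext fun j => ?_
    rw [hc.fac, ← Category.assoc]
    apply (yonedaAlongEquiv L (K.obj j) s.pt).injective
    rw [yonedaAlongEquiv_comp_whiskerLeft]
    exact (hm j).trans (Equiv.apply_symm_apply _ _).symm

end LeftKanExtension

section ExternalProduct

variable {C : Type*} [Category.{v} C]

def extProdMap {X X' Y Y' : Cᵒᵖ ⥤ Type v} (τ : X ⟶ X') (σ : Y ⟶ Y') :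
    extProd X Y ⟶ extProd X' Y' where
  app p := TypeCat.ofHom fun z => (τ.app _ z.1, σ.app _ z.2)
  naturality p q f := by
    ext z
    exact Prod.ext (NatTrans.naturality_apply τ _ _) (NatTrans.naturality_apply σ _ _)

def extProdFunctor : (Cᵒᵖ ⥤ Type v) ⥤ (Cᵒᵖ ⥤ Type v) ⥤ (C × C)ᵒᵖ ⥤ Type v where
  obj X :=
    { obj Y := extProd X Y
      map σ := extProdMap (𝟙 X) σ }
  map τ := { app Y := extProdMap τ (𝟙 Y) }

instance (X : Cᵒᵖ ⥤ Type v) : PreservesColimitsOfSize.{v, v} (extProdFunctor.obj X) :=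
  preservesColimits_of_evaluation _ fun p => preservesColimits_of_natIso
    (NatIso.ofComponents (fun _ => Iso.refl _) :
      (evaluation _ _).obj (op p.unop.2) ⋙ tensorLeft (X.obj (op p.unop.1)) ≅
        extProdFunctor.obj X ⋙ (evaluation _ _).obj p)

instance (Y : Cᵒᵖ ⥤ Type v) : PreservesColimitsOfSize.{v, v} (extProdFunctor.flip.obj Y) :=
  preservesColimits_of_evaluation _ fun p => preservesColimits_of_natIso
    (NatIso.ofComponents (fun _ => Iso.refl _) :
      (evaluation _ _).obj (op p.unop.1) ⋙ tensorRight (Y.obj (op p.unop.2)) ≅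
        extProdFunctor.flip.obj Y ⋙ (evaluation _ _).obj p)

variable {J₁ J₂ : Type v} [Category.{v} J₁] [Category.{v} J₂] {K₁ : J₁ ⥤ C} {K₂ : J₂ ⥤ C}

/-- `yoneda.obj (a, b)` is definitionally `extProd (yoneda.obj a) (yoneda.obj b)`, so
`extProdFunctor.mapCocone₂ c₁ c₂` is a cocone under representables of `C × C`. -/
def CategoryTheory.Limits.Cocone.extProd (c₁ : Cocone (K₁ ⋙ yoneda))
    (c₂ : Cocone (K₂ ⋙ yoneda)) : Cocone (K₁.prod K₂ ⋙ yoneda) :=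
  (Cocone.precompose (NatIso.ofComponents (fun _ => Iso.refl _) :
    K₁.prod K₂ ⋙ yoneda ≅ _).hom).obj (extProdFunctor.mapCocone₂ c₁ c₂)

noncomputable def CategoryTheory.Limits.IsColimit.extProd {c₁ : Cocone (K₁ ⋙ yoneda)}
    {c₂ : Cocone (K₂ ⋙ yoneda)} (hc₁ : IsColimit c₁) (hc₂ : IsColimit c₂) :
    IsColimit (c₁.extProd c₂) :=
  (IsColimit.precomposeHomEquiv _ _).symm (isColimitOfPreserves₂ extProdFunctor hc₁ hc₂)

end ExternalProduct

/-- Day convolution of small presheaves is small: if `D` is the Day convolution `F ⊗_Day G`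
(characterized as the left Kan extension of the external product `F × G` along `(⊗)ᵒᵖ`),
and `F` and `G` are small presheaves on the monoidal locally small category `A`, then `D`
is a small presheaf. -/
theorem isSmallPresheaf_day_convolution (F G : Aᵒᵖ ⥤ Type v) (D : Aᵒᵖ ⥤ Type v)
    (α : extProd F G ⟶ (tensorF (A := A)).op ⋙ D)
    (h : D.IsLeftKanExtension α)
    (hF : IsSmallPresheaf F) (hG : IsSmallPresheaf G) :
    IsSmallPresheaf D := by
  obtain ⟨J₁, K₁, c₁, ⟨hc₁⟩, rfl⟩ := hF.exists_isColimit
  obtain ⟨J₂, K₂, c₂, ⟨hc₂⟩, rfl⟩ := hG.exists_isColimit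
  exact isSmallPresheaf_of_isColimit ((hc₁.extProd hc₂).pushAlong tensorF D α (hα := h))
end

section
/- Left multiadjoints characterize Fam-admissibility: a functor L : A → B is such that Fam_Σ(L) (the functor induced on free coproduct completions) has a right adjoint if and only if L is a left multiadjoint in the sense of Diers: for every object Z of B there is a family of morphisms (h_i : L X_i → Z)_{i ∈ I} such that every morphism k : L X → Z factors as k = h_i ∘ L f for a unique pair (i, f) with f : X → X_i. -/
open CategoryTheory

universe v u u'

/-- The free coproduct completion `Fam_Σ A`: objects are small families of objects of `A`. -/
structure Fam (A : Type u) [Category.{v} A] where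
  ι : Type v
  obj : ι → A

variable {A : Type u} [Category.{v} A] {B : Type u'} [Category.{v} B]

/-- Morphisms of families: a reindexing function together with componentwise morphisms. -/
instance : Category.{v} (Fam A) where
  Hom X Y := Σ φ : X.ι → Y.ι, ∀ i, X.obj i ⟶ Y.obj (φ i)
  id X := ⟨fun i => i, fun _ => 𝟙 _⟩
  comp f g := ⟨fun i => g.1 (f.1 i), fun i => f.2 i ≫ g.2 (f.1 i)⟩
  id_comp f := Sigma.ext rfl (heq_of_eq (funext fun i => Category.id_comp _))
  comp_id f := Sigma.ext rfl (heq_of_eq (funext fun i => Category.comp_id _))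
  assoc f g h := Sigma.ext rfl (heq_of_eq (funext fun i => Category.assoc _ _ _))

/-- The functor `Fam_Σ L` induced on free coproduct completions, applying `L` componentwise. -/
def famMap (L : A ⥤ B) : Fam A ⥤ Fam B where
  obj X := ⟨X.ι, fun i => L.obj (X.obj i)⟩
  map f := ⟨f.1, fun i => L.map (f.2 i)⟩
  map_id X := Sigma.ext rfl (heq_of_eq (funext fun i => L.map_id _))
  map_comp f g := Sigma.ext rfl (heq_of_eq (funext fun i => L.map_comp _ _))

/-- `L` is a left multiadjoint (Diers): every `Z` admits a universal family of morphisms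
`h i : L (X i) ⟶ Z` through which every `k : L W ⟶ Z` factors as `k = h i ∘ L f` for a unique
pair `(i, f)`. -/
def IsLeftMultiadjoint (L : A ⥤ B) : Prop :=
  ∀ Z : B, ∃ (I : Type v) (Xs : I → A) (h : ∀ i, L.obj (Xs i) ⟶ Z),
    ∀ (W : A) (k : L.obj W ⟶ Z), ∃! p : Σ i : I, W ⟶ Xs i, L.map p.2 ≫ h p.1 = k

/-!
A morphism `L W ⟶ Z` is the same as a morphism of singleton families `Fam_Σ L [W] ⟶ [Z]`, so
an adjunction `Fam_Σ L ⊣ R` makes the counit at `[Z]` a universal family with vertices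
`R [Z]`. Conversely, a morphism of families is a family of morphisms out of singletons, so the
universal families of the `Y j` assemble into `R Y := Σ j, (universal family of Y j)`; the
resulting hom-bijection is natural because unique factorizations are stable under
precomposition with `L f`.
-/

namespace Fam

abbrev single (W : A) : Fam A := ⟨PUnit, fun _ => W⟩

def homEquiv (X Y : Fam A) : (X ⟶ Y) ≃ ∀ i, Σ j, X.obj i ⟶ Y.obj j where
  toFun f i := ⟨f.1 i, f.2 i⟩
  invFun g := ⟨fun i => (g i).1, fun i => (g i).2⟩
  left_inv _ := rfl
  right_inv _ := rfl

theorem hom_ext {X Y : Fam A} {f g : X ⟶ Y} (h : ∀ i, homEquiv X Y f i = homEquiv X Y g i) :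
    f = g :=
  (homEquiv X Y).injective (funext h)

def singleHomEquiv (W : A) (Y : Fam A) : (single W ⟶ Y) ≃ Σ j, W ⟶ Y.obj j :=
  (homEquiv _ _).trans (Equiv.piUnique _)

end Fam

theorem isLeftMultiadjoint_iff_bijective (L : A ⥤ B) :
    IsLeftMultiadjoint L ↔ ∀ Z : B, ∃ (I : Type v) (Xs : I → A) (h : ∀ i, L.obj (Xs i) ⟶ Z),
      ∀ W : A, Function.Bijective fun p : Σ i, W ⟶ Xs i => L.map p.2 ≫ h p.1 := by
  simp only [IsLeftMultiadjoint, Function.bijective_iff_existsUnique]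

theorem CategoryTheory.Adjunction.isLeftMultiadjoint {L : A ⥤ B} {R : Fam B ⥤ Fam A}
    (adj : famMap L ⊣ R) : IsLeftMultiadjoint L := by
  refine (isLeftMultiadjoint_iff_bijective L).2 fun Z => ?_
  let C := R.obj (Fam.single Z)
  refine ⟨C.ι, C.obj, (adj.counit.app (Fam.single Z)).2, fun W => ?_⟩
  -- with `homEquiv` unfolded to its counit form, `e` is `p ↦ L.map p.2 ≫ ε p.1` by definition
  let e : (Σ i, W ⟶ C.obj i) ≃ (L.obj W ⟶ Z) :=
    (Fam.singleHomEquiv W C).symm.trans <| (adj.homEquiv (Fam.single W) (Fam.single Z)).symm.trans <|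
      (Fam.singleHomEquiv (L.obj W) (Fam.single Z)).trans (Equiv.uniqueSigma _)
  exact e.bijective

section UniversalFamily

variable {L : A ⥤ B} {Z : B} {I : Type v} {Xs : I → A} {h : ∀ i, L.obj (Xs i) ⟶ Z}

noncomputable def factorEquiv
    (hh : ∀ W : A, Function.Bijective fun p : Σ i, W ⟶ Xs i => L.map p.2 ≫ h p.1) (W : A) :
    (Σ i, W ⟶ Xs i) ≃ (L.obj W ⟶ Z) :=
  Equiv.ofBijective _ (hh W)

theorem factorEquiv_symm_map_comp
    (hh : ∀ W : A, Function.Bijective fun p : Σ i, W ⟶ Xs i => L.map p.2 ≫ h p.1)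
    {W' W : A} (f : W' ⟶ W) (k : L.obj W ⟶ Z) :
    (factorEquiv hh W').symm (L.map f ≫ k) =
      ⟨((factorEquiv hh W).symm k).1, f ≫ ((factorEquiv hh W).symm k).2⟩ := by
  rw [Equiv.symm_apply_eq]
  conv_lhs => rw [← (factorEquiv hh W).apply_symm_apply k]
  simp only [factorEquiv, Equiv.ofBijective_apply, Functor.map_comp, Category.assoc]

end UniversalFamily

def famRightAdjointObj {I : B → Type v} (Xs : ∀ Z, I Z → A) (Y : Fam B) : Fam A :=
  ⟨Σ j, I (Y.obj j), fun q => Xs (Y.obj q.1) q.2⟩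

section RightAdjoint

variable {L : A ⥤ B} {I : B → Type v} {Xs : ∀ Z, I Z → A} {h : ∀ Z i, L.obj (Xs Z i) ⟶ Z}
  (hh : ∀ Z W, Function.Bijective fun p : Σ i, W ⟶ Xs Z i => L.map p.2 ≫ h Z p.1)

noncomputable def famMapHomEquiv (X : Fam A) (Y : Fam B) :
    ((famMap L).obj X ⟶ Y) ≃ (X ⟶ famRightAdjointObj Xs Y) :=
  (Fam.homEquiv _ _).trans <|
    (Equiv.piCongrRight fun i =>
      (Equiv.sigmaCongrRight fun j => (factorEquiv (hh (Y.obj j)) (X.obj i)).symm).trans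
        (Equiv.sigmaAssoc _).symm).trans
    (Fam.homEquiv X (famRightAdjointObj Xs Y)).symm

theorem famMapHomEquiv_naturality_left {X' X : Fam A} {Y : Fam B} (f : X' ⟶ X)
    (g : (famMap L).obj X ⟶ Y) :
    famMapHomEquiv hh X' Y ((famMap L).map f ≫ g) = f ≫ famMapHomEquiv hh X Y g :=
  Fam.hom_ext fun i =>
    congrArg (Equiv.sigmaAssoc fun j k => X'.obj i ⟶ Xs (Y.obj j) k).symm <|
      congrArg (Sigma.mk _) (factorEquiv_symm_map_comp (hh _) (f.2 i) (g.2 (f.1 i)))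

end RightAdjoint

/-- Left multiadjoints characterize `Fam_Σ`-admissibility: `Fam_Σ L` has a right adjoint iff
`L` is a left multiadjoint in the sense of Diers. -/
theorem famMap_hasRightAdjoint_iff_leftMultiadjoint (L : A ⥤ B) :
    (∃ R : Fam B ⥤ Fam A, Nonempty (famMap L ⊣ R)) ↔ IsLeftMultiadjoint L := by
  refine ⟨fun ⟨_, ⟨adj⟩⟩ => adj.isLeftMultiadjoint, fun hL => ?_⟩
  choose I Xs h hh using (isLeftMultiadjoint_iff_bijective L).1 hL
  exact ⟨_, ⟨Adjunction.adjunctionOfEquivRight _ fun _ _ _ => famMapHomEquiv_naturality_left hh⟩⟩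
end

section
/- Admissibility is preserved under precomposition with extension: in a KZ doctrine (P,y), if L : A → B is P-admissible and L̄ : PA → B denotes the left extension of L along y_A into a P-cocomplete object B, then L̄ is P-admissible if and only if L is; in particular, if L̄ : PA → B is P-admissible then so is L ≅ L̄ ∘ y_A, and conversely if L is P-admissible then L̄ has a right adjoint and hence P L̄ has a right adjoint. -/
open CategoryTheory Bicategory

universe w v u

variable {B : Type u} [Bicategory.{w, v} B]

set_option maxHeartbeats 1000000

/-- A 2-cell `η : I ⟶ L ≫ R` exhibits `R` as a left (Kan) extension of `I` along `L` when
pasting with `η` gives a bijection between 2-cells `R ⟶ M` and 2-cells `I ⟶ L ≫ M`. -/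
def IsLeftExt {a b c : B} (L : a ⟶ b) (I : a ⟶ c) (R : b ⟶ c) (η : I ⟶ L ≫ R) : Prop :=
  ∀ M : b ⟶ c, Function.Bijective (fun σ : R ⟶ M => η ≫ L ◁ σ)

namespace IsLeftExt

variable {a b c : B} {L : a ⟶ b} {I : a ⟶ c} {R : b ⟶ c} {η : I ⟶ L ≫ R}

noncomputable def desc (h : IsLeftExt L I R η) {M : b ⟶ c} (φ : I ⟶ L ≫ M) : R ⟶ M :=
  ((h M).2 φ).choose

@[simp] lemma fac (h : IsLeftExt L I R η) {M : b ⟶ c} (φ : I ⟶ L ≫ M) :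
    η ≫ L ◁ h.desc φ = φ :=
  ((h M).2 φ).choose_spec

lemma hom_ext (h : IsLeftExt L I R η) {M : b ⟶ c} {σ τ : R ⟶ M}
    (w : η ≫ L ◁ σ = η ≫ L ◁ τ) : σ = τ :=
  (h M).1 w

lemma ofIso (h : IsLeftExt L I R η) {I' : a ⟶ c} (φ : I' ≅ I) :
    IsLeftExt L I' R (φ.hom ≫ η) := by
  intro M
  constructor
  · intro σ τ e
    apply h.hom_ext (M := M)
    simp only [Category.assoc] at e
    exact (cancel_epi φ.hom).mp e
  · intro ψ
    obtain ⟨σ, hσ⟩ := (h M).2 (φ.inv ≫ ψ)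
    refine ⟨σ, ?_⟩
    simp only at hσ
    simp only [Category.assoc, hσ, Iso.hom_inv_id_assoc]

/-- Uniqueness of left extensions. -/
noncomputable def uniqueIso {R' : b ⟶ c} {η' : I ⟶ L ≫ R'}
    (h : IsLeftExt L I R η) (h' : IsLeftExt L I R' η') : R ≅ R' where
  hom := h.desc η'
  inv := h'.desc η
  hom_inv_id := h.hom_ext (by rw [Bicategory.whiskerLeft_comp, ← Category.assoc, h.fac, h'.fac]; simp)
  inv_hom_id := h'.hom_ext (by rw [Bicategory.whiskerLeft_comp, ← Category.assoc, h'.fac, h.fac]; simp)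

end IsLeftExt

/-- Transport an adjunction along an isomorphism of the left adjoint. -/
noncomputable def adjOfIsoLeft {a b : B} {f f' : a ⟶ b} {g : b ⟶ a}
    (adj : f ⊣ g) (φ : f ≅ f') : f' ⊣ g where
  unit := adj.unit ≫ φ.hom ▷ g
  counit := g ◁ φ.inv ≫ adj.counit
  left_triangle := by
    calc (adj.unit ≫ φ.hom ▷ g) ▷ f' ⊗≫ f' ◁ (g ◁ φ.inv ≫ adj.counit)
        = 𝟙 _ ⊗≫ adj.unit ▷ f' ⊗≫ (φ.hom ▷ (g ≫ f') ≫ f' ◁ (g ◁ φ.inv)) ⊗≫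
            f' ◁ adj.counit ⊗≫ 𝟙 _ := by
          bicategory
      _ = 𝟙 _ ⊗≫ adj.unit ▷ f' ⊗≫ (f ◁ (g ◁ φ.inv) ≫ φ.hom ▷ (g ≫ f)) ⊗≫
            f' ◁ adj.counit ⊗≫ 𝟙 _ := by
          rw [← whisker_exchange]
      _ = 𝟙 _ ⊗≫ (adj.unit ▷ f' ≫ (f ≫ g) ◁ φ.inv) ⊗≫ (φ.hom ▷ (g ≫ f) ≫ f' ◁ adj.counit) ⊗≫
            𝟙 _ := by
          bicategory
      _ = 𝟙 _ ⊗≫ (𝟙 _ ◁ φ.inv ≫ adj.unit ▷ f) ⊗≫ (f ◁ adj.counit ≫ φ.hom ▷ 𝟙 _) ⊗≫ 𝟙 _ := by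
          rw [← whisker_exchange, ← whisker_exchange]
      _ = 𝟙 _ ⊗≫ φ.inv ⊗≫ leftZigzag adj.unit adj.counit ⊗≫ φ.hom ⊗≫ 𝟙 _ := by
          bicategory
      _ = 𝟙 _ ⊗≫ (φ.inv ≫ φ.hom) ⊗≫ 𝟙 _ := by rw [adj.left_triangle]; bicategory
      _ = (λ_ f').hom ≫ (ρ_ f').inv := by rw [φ.inv_hom_id]; bicategory
  right_triangle := by
    have h := adj.right_triangle
    calc g ◁ (adj.unit ≫ φ.hom ▷ g) ⊗≫ (g ◁ φ.inv ≫ adj.counit) ▷ g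
        = g ◁ adj.unit ⊗≫ (g ◁ φ.hom ▷ g ≫ g ◁ φ.inv ▷ g) ⊗≫ adj.counit ▷ g := by
          bicategory
      _ = rightZigzag adj.unit adj.counit := by
          rw [← Bicategory.whiskerLeft_comp, ← comp_whiskerRight, φ.hom_inv_id]; dsimp only [rightZigzag]; bicategory
      _ = (ρ_ g).hom ≫ (λ_ g).inv := h

/-- A KZ doctrine on a bicategory, in the Marmolejo–Wood left-extension form: an object
assignment `obj`, units `y`, and for every `F : a ⟶ obj b` a left extension `ext F` of `F`
along `y a` exhibited by an invertible 2-cell `c F`, such that the extension of `y a` is the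
identity exhibited by the identity, and extensions preserve extensions. -/
structure KZDoctrine (B : Type u) [Bicategory.{w, v} B] where
  obj : B → B
  y : ∀ a : B, a ⟶ obj a
  ext : ∀ {a b : B}, (a ⟶ obj b) → (obj a ⟶ obj b)
  c : ∀ {a b : B} (F : a ⟶ obj b), F ≅ y a ≫ ext F
  isLan : ∀ {a b : B} (F : a ⟶ obj b), IsLeftExt (y a) F (ext F) (c F).hom
  ext_y : ∀ a : B, ext (y a) = 𝟙 (obj a)
  c_y : ∀ a : B, HEq (c (y a)) (ρ_ (y a)).symm
  pres : ∀ {a b d : B} (F : a ⟶ obj b) (G : b ⟶ obj d),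
    IsLeftExt (y a) (F ≫ ext G) (ext F ≫ ext G)
      (((c F).hom ▷ ext G) ≫ (α_ (y a) (ext F) (ext G)).hom)

/-- A 1-cell `f` is `P`-admissible when `P f = ext (f ≫ y b)` has a right adjoint. -/
def PAdmissible (P : KZDoctrine B) {a b : B} (f : a ⟶ b) : Prop :=
  ∃ r : P.obj b ⟶ P.obj a, Nonempty (Bicategory.Adjunction (P.ext (f ≫ P.y b)) r)

/-- An object `X` is `P`-cocomplete when every `F : d ⟶ X` admits a left extension along the
unit `y d`, exhibited by an invertible 2-cell, and these extensions preserve the canonical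
left extensions `ext G`. -/
def PCocomplete (P : KZDoctrine B) (X : B) : Prop :=
  ∀ (d : B) (F : d ⟶ X), ∃ (Fb : P.obj d ⟶ X) (cF : F ⟶ P.y d ≫ Fb),
    IsIso cF ∧ IsLeftExt (P.y d) F Fb cF ∧
      ∀ (e : B) (G : e ⟶ P.obj d),
        IsLeftExt (P.y e) (G ≫ Fb) (P.ext G ≫ Fb)
          (((P.c G).hom ▷ Fb) ≫ (α_ (P.y e) (P.ext G) Fb).hom)

namespace KZDoctrine

variable (P : KZDoctrine B)

/-- The identity `𝟙 (P.obj a)` is the left extension of `y a` along itself, exhibited by the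
right unitor. -/
lemma isLan_y' (a : B) : IsLeftExt (P.y a) (P.y a) (𝟙 (P.obj a)) (ρ_ (P.y a)).inv := by
  have key : ∀ (E : P.obj a ⟶ P.obj a), P.ext (P.y a) = E →
      ∀ (cc : P.y a ≅ P.y a ≫ E), HEq (P.c (P.y a)) cc →
        IsLeftExt (P.y a) (P.y a) E cc.hom := by
    rintro E rfl cc hcc
    rw [eq_of_heq hcc.symm]
    exact P.isLan _
  exact key _ (P.ext_y a) (ρ_ _).symm (P.c_y a)

section Cocom

variable {P} {X : B} (Xbar : P.obj X ⟶ X) (cX : 𝟙 X ⟶ P.y X ≫ Xbar)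

/-- The unit for the adjunction `Xbar ⊣ y X`. -/
noncomputable def cocomUnit : 𝟙 (P.obj X) ⟶ Xbar ≫ P.y X :=
  (P.isLan_y' X).desc ((λ_ (P.y X)).inv ≫ cX ▷ P.y X ≫ (α_ _ _ _).hom)

lemma cocomUnit_fac :
    (ρ_ (P.y X)).inv ≫ P.y X ◁ cocomUnit Xbar cX =
      (λ_ (P.y X)).inv ≫ cX ▷ P.y X ≫ (α_ _ _ _).hom :=
  (P.isLan_y' X).fac _

/-- For a `P`-cocomplete-style structure `(Xbar, cX)` on `X`, we have `Xbar ⊣ y X`. -/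
noncomputable def cocomAdj [IsIso cX] (hX : IsLeftExt (P.y X) (𝟙 X) Xbar cX) :
    Xbar ⊣ P.y X where
  unit := cocomUnit Xbar cX
  counit := inv cX
  left_triangle := by
    have fac := cocomUnit_fac Xbar cX
    have main : cX ≫ P.y X ◁ ((λ_ Xbar).inv ≫ leftZigzag (cocomUnit Xbar cX) (inv cX)) =
        cX ≫ P.y X ◁ (ρ_ Xbar).inv := by
      calc cX ≫ P.y X ◁ ((λ_ Xbar).inv ≫ leftZigzag (cocomUnit Xbar cX) (inv cX))
          = cX ⊗≫ ((ρ_ (P.y X)).inv ≫ P.y X ◁ cocomUnit Xbar cX) ▷ Xbar ⊗≫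
              (P.y X ≫ Xbar) ◁ inv cX ⊗≫ 𝟙 _ := by bicategory
        _ = cX ⊗≫ ((λ_ (P.y X)).inv ≫ cX ▷ P.y X ≫ (α_ _ _ _).hom) ▷ Xbar ⊗≫
              (P.y X ≫ Xbar) ◁ inv cX ⊗≫ 𝟙 _ := by rw [fac]
        _ = 𝟙 _ ⊗≫ cX ⊗≫ (cX ▷ (P.y X ≫ Xbar) ≫ (P.y X ≫ Xbar) ◁ inv cX) ⊗≫ 𝟙 _ := by
              bicategory
        _ = 𝟙 _ ⊗≫ cX ⊗≫ (𝟙 X ◁ inv cX ≫ cX ▷ 𝟙 X) ⊗≫ 𝟙 _ := by rw [← whisker_exchange]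
        _ = 𝟙 _ ⊗≫ (cX ≫ inv cX) ⊗≫ cX ⊗≫ 𝟙 _ := by bicategory
        _ = cX ≫ P.y X ◁ (ρ_ Xbar).inv := by rw [IsIso.hom_inv_id]; bicategory
    have key := hX.hom_ext main
    calc leftZigzag (cocomUnit Xbar cX) (inv cX)
        = (λ_ Xbar).hom ≫ ((λ_ Xbar).inv ≫ leftZigzag (cocomUnit Xbar cX) (inv cX)) := by simp
      _ = (λ_ Xbar).hom ≫ (ρ_ Xbar).inv := by rw [key]
  right_triangle := by
    have fac := cocomUnit_fac Xbar cX
    calc P.y X ◁ cocomUnit Xbar cX ⊗≫ inv cX ▷ P.y X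
        = (ρ_ (P.y X)).hom ≫ ((ρ_ (P.y X)).inv ≫ P.y X ◁ cocomUnit Xbar cX) ⊗≫
            inv cX ▷ P.y X := by bicategory
      _ = (ρ_ (P.y X)).hom ≫ ((λ_ (P.y X)).inv ≫ cX ▷ P.y X ≫ (α_ _ _ _).hom) ⊗≫
            inv cX ▷ P.y X := by rw [fac]
      _ = (ρ_ (P.y X)).hom ≫ (λ_ (P.y X)).inv ≫ (cX ≫ inv cX) ▷ P.y X ⊗≫ 𝟙 _ := by
            rw [comp_whiskerRight]; bicategory
      _ = (ρ_ (P.y X)).hom ≫ (λ_ (P.y X)).inv := by rw [IsIso.hom_inv_id]; bicategory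

end Cocom

section ExtAdj

variable {P} {x z : B} (f : x ⟶ z) (G : z ⟶ P.obj x)

/-- Candidate unit for an adjunction `P.ext (f ≫ y z) ⊣ P.ext G`. -/
noncomputable def extUnit (u₀ : P.y x ⟶ f ≫ G) :
    𝟙 (P.obj x) ⟶ P.ext (f ≫ P.y z) ≫ P.ext G :=
  (P.isLan_y' x).desc (u₀ ≫ f ◁ (P.c G).hom ≫ (α_ f (P.y z) (P.ext G)).inv ≫
    (P.c (f ≫ P.y z)).hom ▷ P.ext G ≫ (α_ _ _ _).hom)

lemma extUnit_fac (u₀ : P.y x ⟶ f ≫ G) :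
    (ρ_ (P.y x)).inv ≫ P.y x ◁ extUnit f G u₀ =
      u₀ ≫ f ◁ (P.c G).hom ≫ (α_ f (P.y z) (P.ext G)).inv ≫
        (P.c (f ≫ P.y z)).hom ▷ P.ext G ≫ (α_ _ _ _).hom :=
  (P.isLan_y' x).fac _

/-- Candidate counit for an adjunction `P.ext (f ≫ y z) ⊣ P.ext G`. -/
noncomputable def extCounit (e₀ : G ≫ P.ext (f ≫ P.y z) ⟶ P.y z) :
    P.ext G ≫ P.ext (f ≫ P.y z) ⟶ 𝟙 (P.obj z) :=
  (P.pres G (f ≫ P.y z)).desc (e₀ ≫ (ρ_ (P.y z)).inv)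

lemma extCounit_fac (e₀ : G ≫ P.ext (f ≫ P.y z) ⟶ P.y z) :
    ((P.c G).hom ▷ P.ext (f ≫ P.y z) ≫ (α_ (P.y z) (P.ext G) (P.ext (f ≫ P.y z))).hom) ≫
      P.y z ◁ extCounit f G e₀ = e₀ ≫ (ρ_ (P.y z)).inv :=
  (P.pres G (f ≫ P.y z)).fac _

noncomputable def extAdj (u₀ : P.y x ⟶ f ≫ G) (e₀ : G ≫ P.ext (f ≫ P.y z) ⟶ P.y z)
    (hC1 : u₀ ▷ P.ext (f ≫ P.y z) ≫ (α_ f G (P.ext (f ≫ P.y z))).hom ≫ f ◁ e₀ =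
      (P.c (f ≫ P.y z)).inv)
    (hC2 : G ◁ extUnit f G u₀ ≫ (α_ G (P.ext (f ≫ P.y z)) (P.ext G)).inv ≫ e₀ ▷ P.ext G =
      (ρ_ G).hom ≫ (P.c G).hom) :
    P.ext (f ≫ P.y z) ⊣ P.ext G where
  unit := extUnit f G u₀
  counit := extCounit f G e₀
  left_triangle := by
    have main : (P.c (f ≫ P.y z)).hom ≫ P.y x ◁ ((λ_ (P.ext (f ≫ P.y z))).inv ≫
        leftZigzag (extUnit f G u₀) (extCounit f G e₀)) =
        (P.c (f ≫ P.y z)).hom ≫ P.y x ◁ (ρ_ (P.ext (f ≫ P.y z))).inv := by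
      calc (P.c (f ≫ P.y z)).hom ≫ P.y x ◁ ((λ_ (P.ext (f ≫ P.y z))).inv ≫
            leftZigzag (extUnit f G u₀) (extCounit f G e₀))
          = (P.c (f ≫ P.y z)).hom ≫
              (((ρ_ (P.y x)).inv ≫ P.y x ◁ extUnit f G u₀) ▷ P.ext (f ≫ P.y z) ⊗≫
              (P.y x ≫ P.ext (f ≫ P.y z)) ◁ extCounit f G e₀ ⊗≫ 𝟙 _) := by bicategory
        _ = (P.c (f ≫ P.y z)).hom ≫
              ((u₀ ≫ f ◁ (P.c G).hom ≫ (α_ f (P.y z) (P.ext G)).inv ≫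
                (P.c (f ≫ P.y z)).hom ▷ P.ext G ≫ (α_ _ _ _).hom) ▷ P.ext (f ≫ P.y z) ⊗≫
              (P.y x ≫ P.ext (f ≫ P.y z)) ◁ extCounit f G e₀ ⊗≫ 𝟙 _) := by rw [extUnit_fac]
        _ = (P.c (f ≫ P.y z)).hom ≫
              (u₀ ▷ P.ext (f ≫ P.y z) ⊗≫ (f ◁ (P.c G).hom) ▷ P.ext (f ≫ P.y z) ⊗≫
              ((P.c (f ≫ P.y z)).hom ▷ (P.ext G ≫ P.ext (f ≫ P.y z)) ≫
                (P.y x ≫ P.ext (f ≫ P.y z)) ◁ extCounit f G e₀) ⊗≫ 𝟙 _) := by bicategory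
        _ = (P.c (f ≫ P.y z)).hom ≫
              (u₀ ▷ P.ext (f ≫ P.y z) ⊗≫ (f ◁ (P.c G).hom) ▷ P.ext (f ≫ P.y z) ⊗≫
              ((f ≫ P.y z) ◁ extCounit f G e₀ ≫ (P.c (f ≫ P.y z)).hom ▷ 𝟙 (P.obj z)) ⊗≫
              𝟙 _) := by
            rw [← whisker_exchange]
        _ = (P.c (f ≫ P.y z)).hom ≫
              (u₀ ▷ P.ext (f ≫ P.y z) ⊗≫
              f ◁ (((P.c G).hom ▷ P.ext (f ≫ P.y z) ≫
                (α_ (P.y z) (P.ext G) (P.ext (f ≫ P.y z))).hom) ≫ P.y z ◁ extCounit f G e₀) ⊗≫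
              (P.c (f ≫ P.y z)).hom ▷ 𝟙 (P.obj z) ⊗≫ 𝟙 _) := by bicategory
        _ = (P.c (f ≫ P.y z)).hom ≫
              (u₀ ▷ P.ext (f ≫ P.y z) ⊗≫ f ◁ (e₀ ≫ (ρ_ (P.y z)).inv) ⊗≫
              (P.c (f ≫ P.y z)).hom ▷ 𝟙 (P.obj z) ⊗≫ 𝟙 _) := by rw [extCounit_fac]
        _ = (P.c (f ≫ P.y z)).hom ≫
              ((u₀ ▷ P.ext (f ≫ P.y z) ≫ (α_ f G (P.ext (f ≫ P.y z))).hom ≫ f ◁ e₀) ⊗≫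
              (P.c (f ≫ P.y z)).hom ▷ 𝟙 (P.obj z) ⊗≫ 𝟙 _) := by bicategory
        _ = (P.c (f ≫ P.y z)).hom ≫
              ((P.c (f ≫ P.y z)).inv ⊗≫ (P.c (f ≫ P.y z)).hom ▷ 𝟙 (P.obj z) ⊗≫ 𝟙 _) := by
            rw [hC1]
        _ = ((P.c (f ≫ P.y z)).hom ≫ (P.c (f ≫ P.y z)).inv) ≫
              ((ρ_ (f ≫ P.y z)).inv ≫ (P.c (f ≫ P.y z)).hom ▷ 𝟙 (P.obj z) ≫
                (α_ (P.y x) (P.ext (f ≫ P.y z)) (𝟙 (P.obj z))).hom) := by bicategory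
        _ = (P.c (f ≫ P.y z)).hom ≫ P.y x ◁ (ρ_ (P.ext (f ≫ P.y z))).inv := by
            rw [Iso.hom_inv_id]; bicategory
    have key := (P.isLan (f ≫ P.y z)).hom_ext main
    calc leftZigzag (extUnit f G u₀) (extCounit f G e₀)
        = (λ_ (P.ext (f ≫ P.y z))).hom ≫ ((λ_ (P.ext (f ≫ P.y z))).inv ≫
            leftZigzag (extUnit f G u₀) (extCounit f G e₀)) := by simp
      _ = (λ_ (P.ext (f ≫ P.y z))).hom ≫ (ρ_ (P.ext (f ≫ P.y z))).inv := by rw [key]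
  right_triangle := by
    have main : (P.c G).hom ≫ P.y z ◁ ((ρ_ (P.ext G)).inv ≫
        rightZigzag (extUnit f G u₀) (extCounit f G e₀)) =
        (P.c G).hom ≫ P.y z ◁ (λ_ (P.ext G)).inv := by
      calc (P.c G).hom ≫ P.y z ◁ ((ρ_ (P.ext G)).inv ≫
            rightZigzag (extUnit f G u₀) (extCounit f G e₀))
          = 𝟙 G ⊗≫ ((P.c G).hom ▷ 𝟙 (P.obj x) ≫ (P.y z ≫ P.ext G) ◁ extUnit f G u₀) ⊗≫
              (P.y z ◁ extCounit f G e₀) ▷ P.ext G ⊗≫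
              𝟙 (P.y z ≫ 𝟙 (P.obj z) ≫ P.ext G) := by bicategory
        _ = 𝟙 G ⊗≫ (G ◁ extUnit f G u₀ ≫ (P.c G).hom ▷ (P.ext (f ≫ P.y z) ≫ P.ext G)) ⊗≫
              (P.y z ◁ extCounit f G e₀) ▷ P.ext G ⊗≫
              𝟙 (P.y z ≫ 𝟙 (P.obj z) ≫ P.ext G) := by rw [whisker_exchange]
        _ = 𝟙 G ⊗≫ G ◁ extUnit f G u₀ ⊗≫ (α_ G (P.ext (f ≫ P.y z)) (P.ext G)).inv ≫
              ((((P.c G).hom ▷ P.ext (f ≫ P.y z) ≫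
                (α_ (P.y z) (P.ext G) (P.ext (f ≫ P.y z))).hom) ≫
                P.y z ◁ extCounit f G e₀) ▷ P.ext G) ⊗≫
              𝟙 (P.y z ≫ 𝟙 (P.obj z) ≫ P.ext G) := by bicategory
        _ = 𝟙 G ⊗≫ G ◁ extUnit f G u₀ ⊗≫ (α_ G (P.ext (f ≫ P.y z)) (P.ext G)).inv ≫
              ((e₀ ≫ (ρ_ (P.y z)).inv) ▷ P.ext G) ⊗≫
              𝟙 (P.y z ≫ 𝟙 (P.obj z) ≫ P.ext G) := by rw [extCounit_fac]
        _ = 𝟙 G ⊗≫ (G ◁ extUnit f G u₀ ≫ (α_ G (P.ext (f ≫ P.y z)) (P.ext G)).inv ≫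
              e₀ ▷ P.ext G) ⊗≫ 𝟙 (P.y z ≫ 𝟙 (P.obj z) ≫ P.ext G) := by bicategory
        _ = 𝟙 G ⊗≫ ((ρ_ G).hom ≫ (P.c G).hom) ⊗≫ 𝟙 (P.y z ≫ 𝟙 (P.obj z) ≫ P.ext G) := by rw [hC2]
        _ = (P.c G).hom ≫ P.y z ◁ (λ_ (P.ext G)).inv := by bicategory
    have key := (P.isLan G).hom_ext main
    calc rightZigzag (extUnit f G u₀) (extCounit f G e₀)
        = (ρ_ (P.ext G)).hom ≫ ((ρ_ (P.ext G)).inv ≫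
            rightZigzag (extUnit f G u₀) (extCounit f G e₀)) := by simp
      _ = (ρ_ (P.ext G)).hom ≫ (λ_ (P.ext G)).inv := by rw [key]

end ExtAdj

/-- The comparison 2-cell `P (y a) ⟶ y (P.obj a)`. -/
noncomputable def mCell (a : B) : P.ext (P.y a ≫ P.y (P.obj a)) ⟶ P.y (P.obj a) :=
  (P.isLan (P.y a ≫ P.y (P.obj a))).desc (𝟙 _)

lemma mCell_fac (a : B) :
    (P.c (P.y a ≫ P.y (P.obj a))).hom ≫ P.y a ◁ P.mCell a = 𝟙 _ :=
  (P.isLan _).fac _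

/-- `P (y a)` is left adjoint to the multiplication `P.ext (𝟙 (P.obj a))`. -/
noncomputable def adjPy (a : B) :
    P.ext (P.y a ≫ P.y (P.obj a)) ⊣ P.ext (𝟙 (P.obj a)) := by
  refine extAdj (P.y a) (𝟙 (P.obj a)) ((ρ_ (P.y a)).inv)
    ((λ_ _).hom ≫ P.mCell a) ?_ ?_
  · -- hC1
    rw [← cancel_epi (P.c (P.y a ≫ P.y (P.obj a))).hom, Iso.hom_inv_id]
    calc (P.c (P.y a ≫ P.y (P.obj a))).hom ≫ (ρ_ (P.y a)).inv ▷ P.ext (P.y a ≫ P.y (P.obj a)) ≫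
          (α_ (P.y a) (𝟙 (P.obj a)) (P.ext (P.y a ≫ P.y (P.obj a)))).hom ≫
          P.y a ◁ ((λ_ (P.ext (P.y a ≫ P.y (P.obj a)))).hom ≫ P.mCell a)
        = (P.c (P.y a ≫ P.y (P.obj a))).hom ≫ P.y a ◁ P.mCell a := by bicategory
      _ = 𝟙 _ := P.mCell_fac a
  · -- hC2
    have main : (ρ_ (P.y a)).inv ≫ P.y a ◁ ((λ_ (𝟙 (P.obj a))).inv ≫
        (𝟙 (P.obj a) ◁ extUnit (P.y a) (𝟙 (P.obj a)) (ρ_ (P.y a)).inv ≫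
          (α_ (𝟙 (P.obj a)) (P.ext (P.y a ≫ P.y (P.obj a))) (P.ext (𝟙 (P.obj a)))).inv ≫
          ((λ_ (P.ext (P.y a ≫ P.y (P.obj a)))).hom ≫ P.mCell a) ▷ P.ext (𝟙 (P.obj a)))) =
        (ρ_ (P.y a)).inv ≫ P.y a ◁ ((λ_ (𝟙 (P.obj a))).inv ≫
          ((ρ_ (𝟙 (P.obj a))).hom ≫ (P.c (𝟙 (P.obj a))).hom)) := by
      calc (ρ_ (P.y a)).inv ≫ P.y a ◁ ((λ_ (𝟙 (P.obj a))).inv ≫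
          (𝟙 (P.obj a) ◁ extUnit (P.y a) (𝟙 (P.obj a)) (ρ_ (P.y a)).inv ≫
            (α_ (𝟙 (P.obj a)) (P.ext (P.y a ≫ P.y (P.obj a))) (P.ext (𝟙 (P.obj a)))).inv ≫
            ((λ_ (P.ext (P.y a ≫ P.y (P.obj a)))).hom ≫ P.mCell a) ▷ P.ext (𝟙 (P.obj a))))
          = ((ρ_ (P.y a)).inv ≫
              P.y a ◁ extUnit (P.y a) (𝟙 (P.obj a)) (ρ_ (P.y a)).inv) ⊗≫
              P.y a ◁ (P.mCell a ▷ P.ext (𝟙 (P.obj a))) ⊗≫ 𝟙 _ := by bicategory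
        _ = ((ρ_ (P.y a)).inv ≫ P.y a ◁ (P.c (𝟙 (P.obj a))).hom ≫
              (α_ (P.y a) (P.y (P.obj a)) (P.ext (𝟙 (P.obj a)))).inv ≫
              (P.c (P.y a ≫ P.y (P.obj a))).hom ▷ P.ext (𝟙 (P.obj a)) ≫ (α_ _ _ _).hom) ⊗≫
              P.y a ◁ (P.mCell a ▷ P.ext (𝟙 (P.obj a))) ⊗≫ 𝟙 _ := by rw [extUnit_fac]
        _ = 𝟙 _ ⊗≫ P.y a ◁ (P.c (𝟙 (P.obj a))).hom ⊗≫
              (((P.c (P.y a ≫ P.y (P.obj a))).hom ≫ P.y a ◁ P.mCell a) ▷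
                P.ext (𝟙 (P.obj a))) ⊗≫ 𝟙 _ := by bicategory
        _ = 𝟙 _ ⊗≫ P.y a ◁ (P.c (𝟙 (P.obj a))).hom ⊗≫
              (𝟙 (P.y a ≫ P.y (P.obj a)) ▷ P.ext (𝟙 (P.obj a))) ⊗≫ 𝟙 _ := by
            rw [P.mCell_fac a]
        _ = (ρ_ (P.y a)).inv ≫ P.y a ◁ ((λ_ (𝟙 (P.obj a))).inv ≫
              ((ρ_ (𝟙 (P.obj a))).hom ≫ (P.c (𝟙 (P.obj a))).hom)) := by bicategory
    exact (cancel_epi (λ_ (𝟙 (P.obj a))).inv).mp ((P.isLan_y' a).hom_ext main)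

/-- A pseudofunctor-style action: if `f ⊣ u` then `P.ext (f ≫ y) ⊣ P.ext (u ≫ y)`. -/
noncomputable def adjExtOfAdj {x z : B} {f : x ⟶ z} {u : z ⟶ x} (adj : f ⊣ u) :
    P.ext (f ≫ P.y z) ⊣ P.ext (u ≫ P.y x) := by
  refine extAdj f (u ≫ P.y x)
    ((λ_ (P.y x)).inv ≫ adj.unit ▷ P.y x ≫ (α_ f u (P.y x)).hom)
    ((α_ u (P.y x) (P.ext (f ≫ P.y z))).hom ≫ u ◁ (P.c (f ≫ P.y z)).inv ≫
      (α_ u f (P.y z)).inv ≫ adj.counit ▷ P.y z ≫ (λ_ (P.y z)).hom) ?_ ?_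
  · calc ((λ_ (P.y x)).inv ≫ adj.unit ▷ P.y x ≫ (α_ f u (P.y x)).hom) ▷
          P.ext (f ≫ P.y z) ≫ (α_ f (u ≫ P.y x) (P.ext (f ≫ P.y z))).hom ≫
          f ◁ ((α_ u (P.y x) (P.ext (f ≫ P.y z))).hom ≫ u ◁ (P.c (f ≫ P.y z)).inv ≫
            (α_ u f (P.y z)).inv ≫ adj.counit ▷ P.y z ≫ (λ_ (P.y z)).hom)
        = 𝟙 _ ⊗≫ (adj.unit ▷ (P.y x ≫ P.ext (f ≫ P.y z)) ≫
            (f ≫ u) ◁ (P.c (f ≫ P.y z)).inv) ⊗≫ f ◁ (adj.counit ▷ P.y z) ⊗≫ 𝟙 _ := by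
          bicategory
      _ = 𝟙 _ ⊗≫ (𝟙 x ◁ (P.c (f ≫ P.y z)).inv ≫ adj.unit ▷ (f ≫ P.y z)) ⊗≫
            f ◁ (adj.counit ▷ P.y z) ⊗≫ 𝟙 _ := by rw [← whisker_exchange]
      _ = 𝟙 _ ⊗≫ (P.c (f ≫ P.y z)).inv ⊗≫ leftZigzag adj.unit adj.counit ▷ P.y z ⊗≫ 𝟙 _ := by
          bicategory
      _ = (P.c (f ≫ P.y z)).inv := by rw [adj.left_triangle]; bicategory
  · calc (u ≫ P.y x) ◁ extUnit f (u ≫ P.y x)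
          ((λ_ (P.y x)).inv ≫ adj.unit ▷ P.y x ≫ (α_ f u (P.y x)).hom) ≫
          (α_ (u ≫ P.y x) (P.ext (f ≫ P.y z)) (P.ext (u ≫ P.y x))).inv ≫
          ((α_ u (P.y x) (P.ext (f ≫ P.y z))).hom ≫ u ◁ (P.c (f ≫ P.y z)).inv ≫
            (α_ u f (P.y z)).inv ≫ adj.counit ▷ P.y z ≫ (λ_ (P.y z)).hom) ▷
            P.ext (u ≫ P.y x)
        = 𝟙 _ ⊗≫ u ◁ ((ρ_ (P.y x)).inv ≫ P.y x ◁ extUnit f (u ≫ P.y x)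
            ((λ_ (P.y x)).inv ≫ adj.unit ▷ P.y x ≫ (α_ f u (P.y x)).hom)) ⊗≫
            (u ◁ (P.c (f ≫ P.y z)).inv) ▷ P.ext (u ≫ P.y x) ⊗≫
            (adj.counit ▷ P.y z) ▷ P.ext (u ≫ P.y x) ⊗≫ 𝟙 _ := by bicategory
      _ = 𝟙 _ ⊗≫ u ◁ (((λ_ (P.y x)).inv ≫ adj.unit ▷ P.y x ≫ (α_ f u (P.y x)).hom) ≫
            f ◁ (P.c (u ≫ P.y x)).hom ≫ (α_ f (P.y z) (P.ext (u ≫ P.y x))).inv ≫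
            (P.c (f ≫ P.y z)).hom ▷ P.ext (u ≫ P.y x) ≫ (α_ _ _ _).hom) ⊗≫
            (u ◁ (P.c (f ≫ P.y z)).inv) ▷ P.ext (u ≫ P.y x) ⊗≫
            (adj.counit ▷ P.y z) ▷ P.ext (u ≫ P.y x) ⊗≫ 𝟙 _ := by rw [extUnit_fac]
      _ = 𝟙 _ ⊗≫ u ◁ (adj.unit ▷ P.y x) ⊗≫ (u ≫ f) ◁ (P.c (u ≫ P.y x)).hom ⊗≫
            u ◁ ((((P.c (f ≫ P.y z)).hom ≫ (P.c (f ≫ P.y z)).inv)) ▷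
              P.ext (u ≫ P.y x)) ⊗≫
            (adj.counit ▷ P.y z) ▷ P.ext (u ≫ P.y x) ⊗≫ 𝟙 _ := by bicategory
      _ = 𝟙 _ ⊗≫ u ◁ (adj.unit ▷ P.y x) ⊗≫ ((u ≫ f) ◁ (P.c (u ≫ P.y x)).hom ≫
            adj.counit ▷ (P.y z ≫ P.ext (u ≫ P.y x))) ⊗≫ 𝟙 _ := by
          rw [Iso.hom_inv_id]; bicategory
      _ = 𝟙 _ ⊗≫ u ◁ (adj.unit ▷ P.y x) ⊗≫ (adj.counit ▷ (u ≫ P.y x) ≫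
            𝟙 z ◁ (P.c (u ≫ P.y x)).hom) ⊗≫ 𝟙 _ := by rw [whisker_exchange]
      _ = 𝟙 _ ⊗≫ rightZigzag adj.unit adj.counit ▷ P.y x ⊗≫
            (P.c (u ≫ P.y x)).hom ⊗≫ 𝟙 _ := by bicategory
      _ = (ρ_ (u ≫ P.y x)).hom ≫ (P.c (u ≫ P.y x)).hom := by
          rw [adj.right_triangle]; bicategory

end KZDoctrine

/-- Admissibility is preserved under extension along the unit: for `P`-cocomplete `b` and a
left extension `Lbar` of `L : a ⟶ b` along `y a`, the extension `Lbar` is `P`-admissible iff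
`L` is; and if `L` is `P`-admissible then `Lbar` itself has a right adjoint. -/
theorem admissible_iff_extension_admissible (P : KZDoctrine B) {a b : B} (L : a ⟶ b)
    (hb : PCocomplete P b) (Lbar : P.obj a ⟶ b) (cL : L ⟶ P.y a ≫ Lbar)
    (hiso : IsIso cL) (hext : IsLeftExt (P.y a) L Lbar cL) :
    (PAdmissible P Lbar ↔ PAdmissible P L) ∧
      (PAdmissible P L → ∃ r : b ⟶ P.obj a, Nonempty (Bicategory.Adjunction Lbar r)) := by
  haveI := hiso
  obtain ⟨bbar, cb, hisob, hlanb, hpresb⟩ := hb b (𝟙 b)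
  haveI := hisob
  -- `bbar ⊣ y b`
  let adjb : bbar ⊣ P.y b := KZDoctrine.cocomAdj bbar cb hlanb
  -- `Lbar ≅ P L ≫ bbar`
  let ψ : L ≅ (L ≫ P.y b) ≫ bbar :=
    (ρ_ L).symm ≪≫ whiskerLeftIso L (asIso cb) ≪≫ (α_ L (P.y b) bbar).symm
  have hlan2 := (hpresb a (L ≫ P.y b)).ofIso ψ
  let iso1 : Lbar ≅ P.ext (L ≫ P.y b) ≫ bbar := hext.uniqueIso hlan2
  -- `P L ≅ P (y a) ≫ P Lbar`
  let ψ₂ : L ≫ P.y b ≅ (P.y a ≫ P.y (P.obj a)) ≫ P.ext (Lbar ≫ P.y b) :=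
    whiskerRightIso (asIso cL) (P.y b) ≪≫ α_ (P.y a) Lbar (P.y b) ≪≫
      whiskerLeftIso (P.y a) (P.c (Lbar ≫ P.y b)) ≪≫
      (α_ (P.y a) (P.y (P.obj a)) (P.ext (Lbar ≫ P.y b))).symm
  have hlan3 := (P.pres (P.y a ≫ P.y (P.obj a)) (Lbar ≫ P.y b)).ofIso ψ₂
  let iso2 : P.ext (L ≫ P.y b) ≅ P.ext (P.y a ≫ P.y (P.obj a)) ≫ P.ext (Lbar ≫ P.y b) :=
    (P.isLan (L ≫ P.y b)).uniqueIso hlan3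
  have goal3 : PAdmissible P L → ∃ r : b ⟶ P.obj a, Nonempty (Bicategory.Adjunction Lbar r) := by
    rintro ⟨R, ⟨adjPL⟩⟩
    exact ⟨P.y b ≫ R, ⟨adjOfIsoLeft (adjPL.comp adjb) iso1.symm⟩⟩
  refine ⟨⟨?_, ?_⟩, goal3⟩
  · rintro ⟨R, ⟨adjR⟩⟩
    exact ⟨R ≫ P.ext (𝟙 (P.obj a)), ⟨adjOfIsoLeft ((P.adjPy a).comp adjR) iso2.symm⟩⟩
  · intro hL
    obtain ⟨r, ⟨adjr⟩⟩ := goal3 hL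
    exact ⟨P.ext (r ≫ P.y (P.obj a)), ⟨P.adjExtOfAdj adjr⟩⟩
end

section
/- Composition with the unit induces equivalence of hom-categories for a KZ doctrine: for a KZ doctrine (P, y) on a 2-category C and objects A, B with B P-cocomplete, precomposition with y_A : A → PA induces an equivalence of categories C_ccts(PA, B) ≃ C(A, B), where C_ccts(PA, B) is the full subcategory of C(PA, B) on the P-cocontinuous 1-cells (those preserving left extensions along units). -/
open CategoryTheory Bicategory

universe w v u

variable {B : Type u} [Bicategory.{w, v} B]

/-- A 1-cell `E : P.obj a ⟶ X` is `P`-cocontinuous when it preserves the canonical left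
extensions along units. -/
def PCocontinuous (P : KZDoctrine B) {a X : B} (E : P.obj a ⟶ X) : Prop :=
  ∀ (d : B) (F : d ⟶ P.obj a),
    IsLeftExt (P.y d) (F ≫ E) (P.ext F ≫ E)
      (((P.c F).hom ▷ E) ≫ (α_ (P.y d) (P.ext F) E).hom)

/-- Precomposition with the unit `y a`, as a functor from the full subcategory of the
hom-category `P.obj a ⟶ b` on the `P`-cocontinuous 1-cells to the hom-category `a ⟶ b`. -/
def precompUnit (P : KZDoctrine B) (a b : B) :
    ObjectProperty.FullSubcategory (fun E : P.obj a ⟶ b => PCocontinuous P E) ⥤ (a ⟶ b) where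
  obj E := P.y a ≫ E.obj
  map {E E'} η := P.y a ◁ η.hom
  map_id E := Bicategory.whiskerLeft_id _ _
  map_comp η θ := Bicategory.whiskerLeft_comp _ η.hom θ.hom

/-!
Density of the unit says `ext (y a) = 𝟙`, so a cocontinuous `E`, which preserves this extension,
is itself a left extension of `y a ≫ E` along `y a` by an invertible 2-cell; hence whiskering
with `y a` is bijective on 2-cells out of `E`, i.e. precomposition is fully faithful. For
essential surjectivity, cocompleteness of `b` extends any `F : a ⟶ b` to a cocontinuous
`F̄ : P.obj a ⟶ b` with `F ≅ y a ≫ F̄`.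
-/

namespace IsLeftExt

variable {a b c : B} {L : a ⟶ b} {I : a ⟶ c} {R : b ⟶ c} {η : I ⟶ L ≫ R}

lemma of_iso (h : IsLeftExt L I R η) {R' : b ⟶ c} (e : R ≅ R') :
    IsLeftExt L I R' (η ≫ L ◁ e.hom) := by
  intro M
  convert (h M).comp e.symm.homFromEquiv.bijective using 1
  funext σ
  simp

lemma whiskerLeft_bijective (h : IsLeftExt L I R η) [IsIso η] (M : b ⟶ c) :
    Function.Bijective (fun σ : R ⟶ M => L ◁ σ) := by
  convert (asIso η).homFromEquiv.bijective.comp (h M) using 1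
  funext σ
  simp

end IsLeftExt

lemma PCocontinuous.whiskerLeft_unit_bijective {P : KZDoctrine B} {a b : B} {E : P.obj a ⟶ b}
    (hE : PCocontinuous P E) (E' : P.obj a ⟶ b) :
    Function.Bijective (fun σ : E ⟶ E' => P.y a ◁ σ) :=
  ((hE a (P.y a)).of_iso (eqToIso (by rw [P.ext_y]) ≪≫ λ_ E)).whiskerLeft_bijective E'

lemma precompUnit_map_bijective (P : KZDoctrine B) {a b : B}
    (E E' : ObjectProperty.FullSubcategory (fun E : P.obj a ⟶ b => PCocontinuous P E)) :
    Function.Bijective ((precompUnit P a b).map : (E ⟶ E') → _) :=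
  (E.property.whiskerLeft_unit_bijective E'.obj).comp InducedCategory.homEquiv.bijective

lemma precompUnit_essSurj (P : KZDoctrine B) (a : B) {b : B} (hb : PCocomplete P b) :
    (precompUnit P a b).EssSurj where
  mem_essImage F := by
    obtain ⟨Fb, cF, hcF, -, hFb⟩ := hb a F
    exact ⟨⟨Fb, hFb⟩, ⟨(asIso cF).symm⟩⟩

/-- For a KZ doctrine `(P, y)` and a `P`-cocomplete object `b`, precomposition with the unit
`y a` induces an equivalence between the category of `P`-cocontinuous 1-cells `P.obj a ⟶ b`
and the hom-category `a ⟶ b`. -/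
theorem precomp_unit_equivalence (P : KZDoctrine B) (a b : B) (hb : PCocomplete P b) :
    (precompUnit P a b).IsEquivalence := by
  obtain ⟨hff⟩ := (Functor.FullyFaithful.nonempty_iff_map_bijective (precompUnit P a b)).2
    (precompUnit_map_bijective P)
  have := hff.full
  have := hff.faithful
  have := precompUnit_essSurj P a hb
  exact { }
end
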